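/- arXiv:2511.12967 — 2 statements merged into one kernel-verified Lean document; each statement's English description precedes it below -/
import Mathlib

section
/- Specialize to $n = 2$: the light cone is $\mathcal{P}_2 = \{(y_1, y_2, y_3) \in \mathbb{R}^3 : y_1 > 0,\ y_2 - y_3^2/y_1 > 0\}$. For $t = (t_1, t_2, t_3) \in \mathcal{P}_2$ and $s_1 > -3/2$, $s_2 > -1$, one has $\int_{\mathcal{P}_2} e^{-4\pi (y_1 t_1 + y_2 t_2 + y_3 t_3)} y_1^{s_1} \left(y_2 - \frac{y_3^2}{y_1}\right)^{s_2} dy_1\, dy_2\, dy_3 = \frac{\Gamma(s_2+1)\,\Gamma(s_1 + 3/2)}{2^{2 s_2 + 3} \pi^{s_1 + s_2 + 5/2}} \cdot t_2^{-s_2 - 3/2} \left(4 t_1 - \frac{t_3^2}{t_2}\right)^{-s_1 - 3/2}$. -/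
/-!
Integrate in the order `y₂`, `y₃`, `y₁`; the integrand is nonnegative, so Fubini applies as soon
as the iterated integrals converge. For fixed `y₁ > 0` and `y₃` the `y₂`-integral runs over
`y₂ > y₃² / y₁` and is a shifted Gamma integral, equal to
`(4πt₂)^(-(s₂+1)) Γ(s₂+1) e^{-4π t₂ y₃² / y₁}` times the remaining factors. The `y₃`-integral is then
Gaussian, and completing the square turns the exponent into `-π (4t₁ - t₃²/t₂) y₁`, with an extra
factor `√y₁ / (2√t₂)`. The last integral is `Γ(s₁ + 3/2) / (π (4t₁ - t₃²/t₂))^(s₁+3/2)`.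
-/

open Real MeasureTheory Set

section Fubini

variable {α β : Type*} [MeasurableSpace α] [MeasurableSpace β] {μ : Measure α} {ν : Measure β}
  {f : α × β → ℝ}

theorem integrable_prod_of_nonneg [SFinite ν] (hf : 0 ≤ f)
    (hfm : AEStronglyMeasurable f (μ.prod ν))
    (hsec : ∀ᵐ x ∂μ, Integrable (fun y => f (x, y)) ν)
    (hmarg : Integrable (fun x => ∫ y, f (x, y) ∂ν) μ) : Integrable f (μ.prod ν) := by
  have hnorm : ∀ z, ‖f z‖ = f z := fun z => Real.norm_of_nonneg (hf z)
  exact (integrable_prod_iff hfm).2 ⟨hsec, by simpa only [hnorm] using hmarg⟩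

theorem integrable_prod_of_nonneg' [SFinite μ] [SFinite ν] (hf : 0 ≤ f)
    (hfm : AEStronglyMeasurable f (μ.prod ν))
    (hsec : ∀ᵐ y ∂ν, Integrable (fun x => f (x, y)) μ)
    (hmarg : Integrable (fun y => ∫ x, f (x, y) ∂μ) ν) : Integrable f (μ.prod ν) := by
  have hnorm : ∀ z, ‖f z‖ = f z := fun z => Real.norm_of_nonneg (hf z)
  exact (integrable_prod_iff' hfm).2 ⟨hsec, by simpa only [hnorm] using hmarg⟩

end Fubini

section ShiftedGamma

variable {b s : ℝ}

lemma exp_neg_mul_add_mul_rpow_add_sub (b s q x : ℝ) :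
    exp (-(b * (x + q))) * (x + q - q) ^ s = exp (-(b * q)) * (x ^ s * exp (-(b * x))) := by
  rw [add_sub_cancel_right, mul_add, neg_add, exp_add]
  ring

lemma integrableOn_Ioi_exp_neg_mul_mul_sub_rpow (hb : 0 < b) (hs : -1 < s) (q : ℝ) :
    IntegrableOn (fun x => exp (-(b * x)) * (x - q) ^ s) (Ioi q) := by
  rw [← (measurePreserving_add_right volume q).integrableOn_comp_preimage
    (measurableEmbedding_addRight q), preimage_add_const_Ioi, sub_self]
  have h := (integrableOn_rpow_mul_exp_neg_mul_rpow (p := 1) hs one_pos hb).const_mul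
    (exp (-(b * q)))
  simpa only [IntegrableOn, Function.comp_def, exp_neg_mul_add_mul_rpow_add_sub, rpow_one,
    neg_mul] using h

lemma integral_Ioi_exp_neg_mul_mul_sub_rpow (hb : 0 < b) (hs : -1 < s) (q : ℝ) :
    ∫ x in Ioi q, exp (-(b * x)) * (x - q) ^ s
      = exp (-(b * q)) * ((1 / b) ^ (s + 1) * Gamma (s + 1)) := by
  rw [← (measurePreserving_add_right volume q).setIntegral_preimage_emb
    (measurableEmbedding_addRight q), preimage_add_const_Ioi, sub_self]
  simp only [exp_neg_mul_add_mul_rpow_add_sub]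
  rw [integral_const_mul, ← integral_rpow_mul_exp_neg_mul_Ioi (by linarith) hb,
    add_sub_cancel_right]

end ShiftedGamma

section Gaussian

variable {a : ℝ}

lemma exp_neg_quadratic_eq (ha : 0 < a) (b x : ℝ) :
    exp (-(a * x ^ 2 + b * x)) = exp (b ^ 2 / (4 * a)) * exp (-a * (x + b / (2 * a)) ^ 2) := by
  rw [← exp_add]
  congr 1
  field_simp
  ring

lemma integrable_exp_neg_quadratic (ha : 0 < a) (b : ℝ) :
    Integrable (fun x => exp (-(a * x ^ 2 + b * x))) := by
  simp only [exp_neg_quadratic_eq ha]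
  exact ((integrable_exp_neg_mul_sq ha).comp_add_right _).const_mul _

lemma integral_exp_neg_quadratic (ha : 0 < a) (b : ℝ) :
    ∫ x, exp (-(a * x ^ 2 + b * x)) = exp (b ^ 2 / (4 * a)) * √(π / a) := by
  simp only [exp_neg_quadratic_eq ha]
  rw [integral_const_mul, integral_add_right_eq_self (fun x => exp (-a * x ^ 2)),
    integral_gaussian]

end Gaussian

def lightCone : Set (ℝ × ℝ × ℝ) := {y | 0 < y.1 ∧ 0 < y.2.1 - y.2.2 ^ 2 / y.1}

noncomputable def coneIntegrand (s1 s2 t1 t2 t3 : ℝ) : ℝ × ℝ × ℝ → ℝ :=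
  lightCone.indicator fun y =>
    exp (-(4 * π) * (y.1 * t1 + y.2.1 * t2 + y.2.2 * t3)) * y.1 ^ s1 *
      (y.2.1 - y.2.2 ^ 2 / y.1) ^ s2

lemma measurableSet_lightCone : MeasurableSet lightCone :=
  (measurableSet_lt measurable_const measurable_fst).inter <| measurableSet_lt measurable_const <|
    measurable_snd.fst.sub ((measurable_snd.snd.pow_const 2).div measurable_fst)

lemma pos_of_mem_lightCone {t1 t2 t3 : ℝ} (ht : (t1, t2, t3) ∈ lightCone) :
    0 < t2 ∧ 0 < 4 * t1 - t3 ^ 2 / t2 := by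
  obtain ⟨ht1, hdiscr⟩ := ht
  have hprod : t3 ^ 2 < t1 * t2 := by
    rw [sub_pos, div_lt_iff₀ ht1] at hdiscr
    linarith
  have ht2 : 0 < t2 := pos_of_mul_pos_right (lt_of_le_of_lt (sq_nonneg t3) hprod) ht1.le
  refine ⟨ht2, ?_⟩
  rw [sub_pos, div_lt_iff₀ ht2]
  nlinarith

lemma cone_prefactor_eq {s1 s2 t2 D : ℝ} (ht2 : 0 < t2) (hD : 0 < D) :
    (1 / (4 * π * t2)) ^ (s2 + 1) * Gamma (s2 + 1) / (2 * √t2) *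
        ((1 / (π * D)) ^ (s1 + 3 / 2) * Gamma (s1 + 3 / 2))
      = Gamma (s2 + 1) * Gamma (s1 + 3 / 2) / ((2 : ℝ) ^ (2 * s2 + 3) * π ^ (s1 + s2 + 5 / 2)) *
          t2 ^ (-s2 - 3 / 2) * D ^ (-s1 - 3 / 2) := by
  have hπ := pi_pos
  have h2 : (2 : ℝ) ^ (2 * s2 + 3) = 4 ^ (s2 + 1) * 2 := by
    rw [show 2 * s2 + 3 = 2 * (s2 + 1) + 1 by ring, rpow_add two_pos, rpow_mul zero_le_two,
      rpow_one]
    norm_num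
  have hπs : π ^ (s1 + s2 + 5 / 2) = π ^ (s2 + 1) * π ^ (s1 + 3 / 2) := by
    rw [← rpow_add hπ]; ring_nf
  have ht : t2 ^ (-s2 - 3 / 2) = (t2 ^ (s2 + 1) * √t2)⁻¹ := by
    rw [sqrt_eq_rpow, ← rpow_add ht2, ← rpow_neg ht2.le]; ring_nf
  have hDs : D ^ (-s1 - 3 / 2) = (D ^ (s1 + 3 / 2))⁻¹ := by
    rw [← rpow_neg hD.le]; ring_nf
  rw [h2, hπs, ht, hDs, one_div, one_div, inv_rpow (by positivity), inv_rpow (by positivity),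
    mul_rpow (by positivity) ht2.le, mul_rpow (by positivity) hπ.le, mul_rpow hπ.le hD.le]
  have := sqrt_pos.2 ht2
  field_simp

section ConeIntegrand

variable {s1 s2 t1 t2 t3 : ℝ}

lemma measurable_coneIntegrand : Measurable (coneIntegrand s1 s2 t1 t2 t3) :=
  Measurable.indicator (by fun_prop) measurableSet_lightCone

lemma coneIntegrand_nonneg : 0 ≤ coneIntegrand s1 s2 t1 t2 t3 := by
  intro y
  refine indicator_nonneg (fun y hy => ?_) y
  obtain ⟨hy1, hy2⟩ := hy
  have := rpow_nonneg hy1.le s1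
  have := rpow_nonneg hy2.le s2
  positivity

lemma coneIntegrand_of_nonpos {y1 : ℝ} (hy1 : y1 ≤ 0) (p : ℝ × ℝ) :
    coneIntegrand s1 s2 t1 t2 t3 (y1, p) = 0 :=
  indicator_of_notMem (fun h => hy1.not_gt h.1) _

lemma coneIntegrand_slice_eq_indicator {y1 : ℝ} (hy1 : 0 < y1) (y3 : ℝ) :
    (fun y2 => coneIntegrand s1 s2 t1 t2 t3 (y1, y2, y3)) =
      (Ioi (y3 ^ 2 / y1)).indicator fun y2 => exp (-(4 * π) * (y1 * t1 + y3 * t3)) * y1 ^ s1 *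
        (exp (-(4 * π * t2 * y2)) * (y2 - y3 ^ 2 / y1) ^ s2) := by
  ext y2
  have hmem : (y1, y2, y3) ∈ lightCone ↔ y2 ∈ Ioi (y3 ^ 2 / y1) := by
    simp [lightCone, hy1]
  by_cases hy2 : y2 ∈ Ioi (y3 ^ 2 / y1)
  · rw [coneIntegrand, indicator_of_mem (hmem.2 hy2), indicator_of_mem hy2,
      show -(4 * π) * (y1 * t1 + y2 * t2 + y3 * t3)
        = -(4 * π) * (y1 * t1 + y3 * t3) + -(4 * π * t2 * y2) by ring, exp_add]
    ring
  · rw [coneIntegrand, indicator_of_notMem (mt hmem.1 hy2), indicator_of_notMem hy2]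

lemma integrable_coneIntegrand_slice (ht2 : 0 < t2) (hs2 : -1 < s2) {y1 : ℝ} (hy1 : 0 < y1)
    (y3 : ℝ) : Integrable fun y2 => coneIntegrand s1 s2 t1 t2 t3 (y1, y2, y3) := by
  rw [coneIntegrand_slice_eq_indicator hy1, integrable_indicator_iff measurableSet_Ioi]
  exact (integrableOn_Ioi_exp_neg_mul_mul_sub_rpow (by positivity) hs2 _).const_mul _

lemma integral_coneIntegrand_slice (ht2 : 0 < t2) (hs2 : -1 < s2) {y1 : ℝ} (hy1 : 0 < y1)
    (y3 : ℝ) :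
    ∫ y2, coneIntegrand s1 s2 t1 t2 t3 (y1, y2, y3)
      = (1 / (4 * π * t2)) ^ (s2 + 1) * Gamma (s2 + 1) * (exp (-(4 * π * t1 * y1)) * y1 ^ s1) *
          exp (-(4 * π * t2 / y1 * y3 ^ 2 + 4 * π * t3 * y3)) := by
  rw [coneIntegrand_slice_eq_indicator hy1, integral_indicator measurableSet_Ioi,
    integral_const_mul, integral_Ioi_exp_neg_mul_mul_sub_rpow (by positivity) hs2]
  have hexp : exp (-(4 * π) * (y1 * t1 + y3 * t3)) * exp (-(4 * π * t2 * (y3 ^ 2 / y1)))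
      = exp (-(4 * π * t1 * y1)) * exp (-(4 * π * t2 / y1 * y3 ^ 2 + 4 * π * t3 * y3)) := by
    rw [← exp_add, ← exp_add]
    congr 1
    field_simp
    ring
  linear_combination (y1 ^ s1 * ((1 / (4 * π * t2)) ^ (s2 + 1) * Gamma (s2 + 1))) * hexp

lemma integrable_coneIntegrand_fiber (ht2 : 0 < t2) (hs2 : -1 < s2) (y1 : ℝ) :
    Integrable fun p => coneIntegrand s1 s2 t1 t2 t3 (y1, p) := by
  rcases le_or_gt y1 0 with hy1 | hy1
  · simp only [coneIntegrand_of_nonpos hy1]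
    exact integrable_zero _ _ _
  rw [Measure.volume_eq_prod]
  refine integrable_prod_of_nonneg' (fun p => coneIntegrand_nonneg _)
    (measurable_coneIntegrand.comp measurable_prodMk_left).aestronglyMeasurable
    (.of_forall (integrable_coneIntegrand_slice ht2 hs2 hy1)) ?_
  simp only [integral_coneIntegrand_slice ht2 hs2 hy1]
  exact (integrable_exp_neg_quadratic (by positivity) _).const_mul _

lemma integral_coneIntegrand_fiber (ht2 : 0 < t2) (hs2 : -1 < s2) :
    (fun y1 => ∫ p, coneIntegrand s1 s2 t1 t2 t3 (y1, p)) = (Ioi 0).indicator fun y1 =>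
      (1 / (4 * π * t2)) ^ (s2 + 1) * Gamma (s2 + 1) / (2 * √t2) *
        (y1 ^ (s1 + 1 / 2) * exp (-(π * (4 * t1 - t3 ^ 2 / t2) * y1))) := by
  ext y1
  rcases le_or_gt y1 0 with hy1 | hy1
  · simp [coneIntegrand_of_nonpos hy1, hy1]
  rw [indicator_of_mem (mem_Ioi.2 hy1), Measure.volume_eq_prod, integral_prod_symm _
    (by rw [← Measure.volume_eq_prod]; exact integrable_coneIntegrand_fiber ht2 hs2 y1)]
  simp only [integral_coneIntegrand_slice ht2 hs2 hy1]
  rw [integral_const_mul, integral_exp_neg_quadratic (by positivity)]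
  have hsqrt : √(π / (4 * π * t2 / y1)) = √y1 / (2 * √t2) := by
    rw [← sqrt_sq (by positivity : 0 ≤ 2 * √t2), ← sqrt_div hy1.le]
    congr 1
    rw [mul_pow, sq_sqrt ht2.le]
    field_simp
    ring
  have hexp : exp (-(4 * π * t1 * y1)) * exp ((4 * π * t3) ^ 2 / (4 * (4 * π * t2 / y1)))
      = exp (-(π * (4 * t1 - t3 ^ 2 / t2) * y1)) := by
    rw [← exp_add]
    congr 1
    field_simp
    ring
  rw [hsqrt, ← hexp, rpow_add hy1, sqrt_eq_rpow]
  ring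

lemma integral_coneIntegrand (hs1 : -(3 / 2) < s1) (hs2 : -1 < s2) (ht2 : 0 < t2)
    (hD : 0 < 4 * t1 - t3 ^ 2 / t2) :
    ∫ y, coneIntegrand s1 s2 t1 t2 t3 y
      = Gamma (s2 + 1) * Gamma (s1 + 3 / 2) / ((2 : ℝ) ^ (2 * s2 + 3) * π ^ (s1 + s2 + 5 / 2)) *
          t2 ^ (-s2 - 3 / 2) * (4 * t1 - t3 ^ 2 / t2) ^ (-s1 - 3 / 2) := by
  have hπD : 0 < π * (4 * t1 - t3 ^ 2 / t2) := by positivity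
  have hs : -1 < s1 + 1 / 2 := by linarith
  have hmarg := integral_coneIntegrand_fiber (s1 := s1) (t1 := t1) (t3 := t3) ht2 hs2
  have hint : Integrable (coneIntegrand s1 s2 t1 t2 t3) (volume.prod volume) := by
    refine integrable_prod_of_nonneg coneIntegrand_nonneg
      measurable_coneIntegrand.aestronglyMeasurable
      (.of_forall (integrable_coneIntegrand_fiber ht2 hs2)) ?_
    rw [hmarg, integrable_indicator_iff measurableSet_Ioi]
    refine Integrable.const_mul ?_ _
    simpa only [IntegrableOn, rpow_one, neg_mul] using
      integrableOn_rpow_mul_exp_neg_mul_rpow hs one_pos hπD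
  rw [Measure.volume_eq_prod, integral_prod _ hint, hmarg, integral_indicator measurableSet_Ioi,
    integral_const_mul, ← cone_prefactor_eq ht2 hD, ← integral_rpow_mul_exp_neg_mul_Ioi
      (by linarith) hπD]
  ring_nf

end ConeIntegrand

theorem stmt_4 (s1 s2 t1 t2 t3 : ℝ)
    (ht : 0 < t1 ∧ 0 < t2 - t3 ^ 2 / t1)
    (hs1 : -(3/2) < s1) (hs2 : -1 < s2) :
    ∫ y in {y : ℝ × ℝ × ℝ | 0 < y.1 ∧ 0 < y.2.1 - y.2.2 ^ 2 / y.1},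
      Real.exp (-(4*π) * (y.1 * t1 + y.2.1 * t2 + y.2.2 * t3)) *
        y.1 ^ s1 * (y.2.1 - y.2.2 ^ 2 / y.1) ^ s2
      = Real.Gamma (s2 + 1) * Real.Gamma (s1 + 3/2) /
          ((2:ℝ) ^ (2*s2 + 3) * π ^ (s1 + s2 + 5/2)) *
        t2 ^ (-s2 - 3/2) * (4*t1 - t3 ^ 2 / t2) ^ (-s1 - 3/2) := by
  obtain ⟨ht2, hD⟩ := pos_of_mem_lightCone ht
  exact (integral_indicator measurableSet_lightCone).symm.trans
    (integral_coneIntegrand hs1 hs2 ht2 hD)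
end

section
/- Let $b = (b_1, b_2, b_3) \in \mathcal{P}_2$ (so $b_1 > 0$, $b_1 b_2 - b_3^2 > 0$). Suppose the real parameters satisfy $\eta_2 > -1$, $\eta_1 > -3/2$, $r_2 > \eta_2 + 3/2$, and $r_1 > \eta_1 + 2$. Then the integral $\int_{\mathcal{P}_2} \Delta^{-\mathbf{r}}(y + b)\, \Delta^{\boldsymbol{\eta}}(y)\, dy$ is finite and equals $C \cdot \Delta^{\boldsymbol{\eta} - \mathbf{r}}(b)\, \Delta(b)^{3/2}$ for a positive constant $C$ depending only on $\mathbf{r}, \boldsymbol{\eta}$, where for $y \in \mathcal{P}_2$, $\Delta^{\mathbf{s}}(y) = y_1^{s_1 - s_2} (y_1 y_2 - y_3^2)^{s_2}$ and $\Delta(y) = y_1 y_2 - y_3^2$. -/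
/-!
Integrate by Fubini in the order `y₂`, `y₃`, `y₁`. For fixed `y₁ = x > 0` and `y₃ = u` the cone
condition reads `y₂ > u² / x`; after the shift `y₂ = s + u² / x` both determinants are affine in
`s`: `det y = x s` and `det (y + b) = (x + b₁) s + γ`, where completing the square in `u` gives
`γ = (b₁ / x) (u - x b₃ / b₁)² + (x + b₁) det b / b₁`. The three one-dimensional integrals are
then rescaled copies of `∫₀^∞ s^a (1 + s)^(-c) ds` (in `s` and in `x`) and of `∫ (1 + v²)^p dv`
(in `u`), and the scalings produce the powers of `b₁` and `det b`.
-/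

open Real MeasureTheory Set

lemma setIntegral_pos_of_forall_pos {α : Type*} [MeasurableSpace α] {μ : Measure α}
    {f : α → ℝ} {s : Set α} (hs : MeasurableSet s) (hμs : μ s ≠ 0) (hf : IntegrableOn f s μ)
    (hpos : ∀ x ∈ s, 0 < f x) : 0 < ∫ x in s, f x ∂μ := by
  rw [setIntegral_pos_iff_support_of_nonneg_ae
    ((ae_restrict_mem hs).mono fun x hx => (hpos x hx).le) hf]
  refine lt_of_lt_of_le (pos_iff_ne_zero.2 hμs) (measure_mono fun x hx => ⟨?_, hx⟩)
  exact (hpos x hx).ne'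

lemma integrable_prod_and_integral_eq_of_nonneg {α β : Type*} [MeasurableSpace α]
    [MeasurableSpace β] {μ : Measure α} {ν : Measure β} [SFinite μ] [SFinite ν]
    {f : α × β → ℝ} {g : α → ℝ} (hf : AEStronglyMeasurable f (μ.prod ν)) (hf₀ : ∀ z, 0 ≤ f z)
    (hslice : ∀ x, Integrable (fun y => f (x, y)) ν ∧ ∫ y, f (x, y) ∂ν = g x)
    (hg : Integrable g μ) :
    Integrable f (μ.prod ν) ∧ ∫ z, f z ∂(μ.prod ν) = ∫ x, g x ∂μ := by
  have hint : Integrable f (μ.prod ν) := by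
    refine (integrable_prod_iff hf).2 ⟨ae_of_all _ fun x => (hslice x).1, ?_⟩
    simpa only [norm_of_nonneg (hf₀ _), (hslice _).2] using hg
  refine ⟨hint, ?_⟩
  rw [integral_prod f hint]
  exact integral_congr_ae (ae_of_all _ fun x => (hslice x).2)

/-- The Beta function `B(a + 1, c - a - 1)`, written as an integral over `(0, ∞)`. -/
noncomputable def betaSecondKind (a c : ℝ) : ℝ := ∫ s in Ioi (0 : ℝ), s ^ a * (1 + s) ^ (-c)

noncomputable def oneAddSqIntegral (p : ℝ) : ℝ := ∫ v : ℝ, (1 + v ^ 2) ^ p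

lemma integrableOn_rpow_mul_one_add_rpow_neg {a c : ℝ} (ha : -1 < a) (hc : a + 1 < c) :
    IntegrableOn (fun s : ℝ => s ^ a * (1 + s) ^ (-c)) (Ioi 0) := by
  have hmeas : AEStronglyMeasurable (fun s : ℝ => s ^ a * (1 + s) ^ (-c)) := by fun_prop
  have near_zero : IntegrableOn (fun s : ℝ => s ^ a * (1 + s) ^ (-c)) (Ioc 0 1) := by
    refine (intervalIntegral.intervalIntegrable_rpow' ha).1.mono' hmeas.restrict ?_
    filter_upwards [ae_restrict_mem measurableSet_Ioc] with s hs
    have hs₀ : 0 < s := hs.1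
    rw [norm_of_nonneg (by positivity)]
    exact mul_le_of_le_one_right (by positivity)
      (rpow_le_one_of_one_le_of_nonpos (by linarith) (by linarith))
  have near_top : IntegrableOn (fun s : ℝ => s ^ a * (1 + s) ^ (-c)) (Ioi 1) := by
    refine (integrableOn_Ioi_rpow_of_lt (by linarith : a - c < -1) one_pos).mono'
      hmeas.restrict ?_
    filter_upwards [ae_restrict_mem measurableSet_Ioi] with s (hs : 1 < s)
    have hs₀ : 0 < s := by linarith
    rw [norm_of_nonneg (by positivity), rpow_sub hs₀, div_eq_mul_inv, ← rpow_neg hs₀.le]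
    exact mul_le_mul_of_nonneg_left
      (rpow_le_rpow_of_nonpos hs₀ (by linarith) (by linarith)) (by positivity)
  rw [← Ioc_union_Ioi_eq_Ioi zero_le_one]
  exact near_zero.union near_top

lemma betaSecondKind_pos {a c : ℝ} (ha : -1 < a) (hc : a + 1 < c) : 0 < betaSecondKind a c :=
  setIntegral_pos_of_forall_pos measurableSet_Ioi (by simp)
    (integrableOn_rpow_mul_one_add_rpow_neg ha hc) fun s (hs : 0 < s) => by positivity

/-- Substitute `s = (γ / α) t`. -/
lemma integral_rpow_mul_add_rpow_neg {a c α γ : ℝ} (ha : -1 < a) (hc : a + 1 < c)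
    (hα : 0 < α) (hγ : 0 < γ) :
    IntegrableOn (fun s : ℝ => s ^ a * (α * s + γ) ^ (-c)) (Ioi 0) ∧
      ∫ s in Ioi (0 : ℝ), s ^ a * (α * s + γ) ^ (-c)
        = α ^ (-(a + 1)) * γ ^ (a + 1 - c) * betaSecondKind a c := by
  set g : ℝ → ℝ := fun s => s ^ a * (α * s + γ) ^ (-c)
  set k := γ / α
  have hk : 0 < k := div_pos hγ hα
  have hg : ∀ t ∈ Ioi (0 : ℝ), g (k * t) = k ^ a * γ ^ (-c) * (t ^ a * (1 + t) ^ (-c)) := by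
    intro t (ht : 0 < t)
    have : α * (k * t) + γ = γ * (1 + t) := by simp only [k]; field_simp; ring
    simp only [g, this, mul_rpow hk.le ht.le, mul_rpow hγ.le (by linarith : (0 : ℝ) ≤ 1 + t)]
    ring
  have hint : IntegrableOn (fun t => g (k * t)) (Ioi 0) :=
    IntegrableOn.congr_fun ((integrableOn_rpow_mul_one_add_rpow_neg ha hc).const_mul _)
      (fun t ht => (hg t ht).symm) measurableSet_Ioi
  refine ⟨by simpa using (integrableOn_Ioi_comp_mul_left_iff g 0 hk).1 hint, ?_⟩
  have hsubst := integral_comp_mul_left_Ioi' g 0 hk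
  rw [mul_zero, setIntegral_congr_fun measurableSet_Ioi hg, integral_const_mul,
    smul_eq_mul] at hsubst
  rw [← hsubst, betaSecondKind, ← mul_assoc, ← mul_assoc]
  congr 1
  simp only [k]
  rw [div_rpow hγ.le hα.le, rpow_sub hγ, rpow_add hγ, rpow_neg hα.le, rpow_add hα, rpow_one,
    rpow_one, rpow_neg hγ.le]
  field_simp

lemma integrable_one_add_sq_rpow {p : ℝ} (hp : p < -(1 / 2)) :
    Integrable (fun v : ℝ => (1 + v ^ 2) ^ p) := by
  simpa [norm_eq_abs, sq_abs] using
    integrable_rpow_neg_one_add_norm_sq (E := ℝ) (μ := volume) (r := -2 * p) (by simp; linarith)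

lemma oneAddSqIntegral_pos {p : ℝ} (hp : p < -(1 / 2)) : 0 < oneAddSqIntegral p := by
  rw [oneAddSqIntegral, ← setIntegral_univ]
  exact setIntegral_pos_of_forall_pos MeasurableSet.univ (by simp)
    (integrable_one_add_sq_rpow hp).integrableOn fun v _ => by positivity

/-- Substitute `u = c + √(M / A) v`. -/
lemma integral_quadratic_rpow {p A M : ℝ} (c : ℝ) (hp : p < -(1 / 2)) (hA : 0 < A)
    (hM : 0 < M) :
    Integrable (fun u : ℝ => (A * (u - c) ^ 2 + M) ^ p) ∧
      ∫ u : ℝ, (A * (u - c) ^ 2 + M) ^ p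
        = A ^ (-(1 / 2) : ℝ) * M ^ (p + 1 / 2) * oneAddSqIntegral p := by
  set f : ℝ → ℝ := fun u => (A * u ^ 2 + M) ^ p
  set k := √(M / A)
  have hk : 0 < k := sqrt_pos.2 (div_pos hM hA)
  have hf : (fun v => f (k * v)) = fun v => M ^ p * (1 + v ^ 2) ^ p := by
    funext v
    have : A * (k * v) ^ 2 + M = M * (1 + v ^ 2) := by
      rw [mul_pow, sq_sqrt (div_pos hM hA).le]; field_simp; ring
    simp only [f, this, mul_rpow hM.le (by positivity : (0 : ℝ) ≤ 1 + v ^ 2)]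
  have hfint : Integrable f := by
    rw [← integrable_comp_mul_left_iff f hk.ne', hf]
    exact (integrable_one_add_sq_rpow hp).const_mul _
  refine ⟨hfint.comp_sub_right c, ?_⟩
  rw [integral_sub_right_eq_self f c]
  have hsubst := Measure.integral_comp_mul_left f k
  rw [hf, integral_const_mul, abs_of_pos (inv_pos.2 hk), smul_eq_mul,
    eq_inv_mul_iff_mul_eq₀ hk.ne'] at hsubst
  rw [oneAddSqIntegral, ← hsubst, ← mul_assoc]
  congr 1
  simp only [k]
  rw [sqrt_eq_rpow, div_rpow hM.le hA.le, rpow_add hM, rpow_neg hA.le]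
  ring

namespace PosDefTwo

/-- The triple `y` stands for the symmetric matrix `!![y.1, y.2.2; y.2.2, y.2.1]`. -/
def det (y : ℝ × ℝ × ℝ) : ℝ := y.1 * y.2.1 - y.2.2 ^ 2

noncomputable def genPow (s₁ s₂ : ℝ) (y : ℝ × ℝ × ℝ) : ℝ := y.1 ^ (s₁ - s₂) * det y ^ s₂

def cone : Set (ℝ × ℝ × ℝ) := {y | 0 < y.1 ∧ 0 < det y}

lemma measurableSet_cone : MeasurableSet cone :=
  (measurableSet_lt measurable_const measurable_fst).inter
    (measurableSet_lt measurable_const (g := det) (by unfold det; fun_prop))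

lemma mk_mem_cone_iff {x : ℝ} (hx : 0 < x) (y₂ u : ℝ) :
    (x, y₂, u) ∈ cone ↔ u ^ 2 / x < y₂ := by
  simp only [cone, det, mem_ofPred_eq, hx, true_and, div_lt_iff₀ hx, sub_pos, mul_comm x]

lemma add_mem_cone {y b : ℝ × ℝ × ℝ} (hy : y ∈ cone) (hb : b ∈ cone) : y + b ∈ cone := by
  obtain ⟨y₁, y₂, y₃⟩ := y
  obtain ⟨b₁, b₂, b₃⟩ := b
  obtain ⟨hy₁, hy⟩ := hy
  obtain ⟨hb₁, hb⟩ := hb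
  simp only [det] at hy hb
  refine ⟨add_pos hy₁ hb₁, ?_⟩
  have key : y₁ * b₁ * ((y₁ + b₁) * (y₂ + b₂) - (y₃ + b₃) ^ 2)
      = y₁ * b₁ * (y₁ * y₂ - y₃ ^ 2) + y₁ * b₁ * (b₁ * b₂ - b₃ ^ 2)
        + b₁ ^ 2 * (y₁ * y₂ - y₃ ^ 2) + y₁ ^ 2 * (b₁ * b₂ - b₃ ^ 2) + (b₁ * y₃ - y₁ * b₃) ^ 2 := by
    ring
  have : 0 < y₁ * b₁ * ((y₁ + b₁) * (y₂ + b₂) - (y₃ + b₃) ^ 2) := by rw [key]; positivity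
  exact pos_of_mul_pos_right this (by positivity)

lemma integrableOn_cone_of_iterated {F : ℝ × ℝ × ℝ → ℝ} {h : ℝ → ℝ → ℝ} {g : ℝ → ℝ}
    (hF : Measurable F) (hF₀ : ∀ y ∈ cone, 0 ≤ F y)
    (hy₂ : ∀ x, 0 < x → ∀ u, IntegrableOn (fun y₂ => F (x, y₂, u)) (Ioi (u ^ 2 / x)) ∧
      ∫ y₂ in Ioi (u ^ 2 / x), F (x, y₂, u) = h x u)
    (hu : ∀ x, 0 < x → Integrable (h x) ∧ ∫ u, h x u = g x)
    (hx : IntegrableOn g (Ioi 0)) :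
    IntegrableOn F cone ∧ ∫ y in cone, F y = ∫ x in Ioi 0, g x := by
  set G := cone.indicator F
  have hG : Measurable G := hF.indicator measurableSet_cone
  have hG₀ : ∀ y, 0 ≤ G y := indicator_nonneg hF₀
  have hfiber : ∀ x, Integrable (fun z : ℝ × ℝ => G (x, z)) ∧
      ∫ z : ℝ × ℝ, G (x, z) = (Ioi 0).indicator g x := by
    intro x
    rcases le_or_gt x 0 with hx₀ | hx₀
    · have hzero : (fun z : ℝ × ℝ => G (x, z)) = 0 :=
        funext fun z => indicator_of_notMem (fun hz => hx₀.not_gt hz.1) F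
      simp [hzero, indicator_of_notMem (show x ∉ Ioi 0 from not_lt.2 hx₀)]
    have hslice : ∀ u, (fun y₂ => G (x, y₂, u))
        = (Ioi (u ^ 2 / x)).indicator (fun y₂ => F (x, y₂, u)) :=
      fun u => funext fun y₂ => by simp only [G, indicator, mk_mem_cone_iff hx₀, mem_Ioi]
    obtain ⟨hint, hval⟩ := integrable_prod_and_integral_eq_of_nonneg (μ := volume) (ν := volume)
      (f := fun p : ℝ × ℝ => G (x, p.2, p.1)) (g := h x)
      (hG.comp (by fun_prop)).aestronglyMeasurable (fun _ => hG₀ _)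
      (fun u => by
        simp only [hslice u, integrable_indicator_iff measurableSet_Ioi,
          integral_indicator measurableSet_Ioi]
        exact hy₂ x hx₀ u)
      (hu x hx₀).1
    rw [Measure.volume_eq_prod, indicator_of_mem (mem_Ioi.2 hx₀), ← (hu x hx₀).2, ← hval,
      ← integral_prod_swap]
    exact ⟨hint.swap, rfl⟩
  obtain ⟨hint, hval⟩ := integrable_prod_and_integral_eq_of_nonneg hG.aestronglyMeasurable hG₀
    hfiber ((integrable_indicator_iff measurableSet_Ioi).2 hx)
  rw [← Measure.volume_eq_prod] at hint hval
  rw [← integrable_indicator_iff measurableSet_cone, ← integral_indicator measurableSet_cone,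
    ← integral_indicator measurableSet_Ioi]
  exact ⟨hint, hval⟩

section

variable {r₁ r₂ η₁ η₂ : ℝ} {b : ℝ × ℝ × ℝ}

lemma det_add_boundary_eq (hb₁ : 0 < b.1) {x : ℝ} (hx : 0 < x) (u : ℝ) :
    det ((x, u ^ 2 / x, u) + b)
      = b.1 / x * (u - x * b.2.2 / b.1) ^ 2 + (x + b.1) * (det b / b.1) := by
  obtain ⟨b₁, b₂, b₃⟩ := b
  simp only [det, Prod.mk_add_mk]
  field_simp
  ring

lemma det_add_boundary_pos (hb : b ∈ cone) {x : ℝ} (hx : 0 < x) (u : ℝ) :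
    0 < det ((x, u ^ 2 / x, u) + b) := by
  rw [det_add_boundary_eq hb.1 hx]
  exact add_pos_of_nonneg_of_pos (mul_nonneg (div_pos hb.1 hx).le (sq_nonneg _))
    (mul_pos (add_pos hx hb.1) (div_pos hb.2 hb.1))

lemma integral_genPow_add_mul_genPow_y₂ (hη₂ : -1 < η₂) (hr₂ : η₂ + 1 < r₂) (hb : b ∈ cone)
    {x : ℝ} (hx : 0 < x) (u : ℝ) :
    IntegrableOn (fun y₂ => genPow (-r₁) (-r₂) ((x, y₂, u) + b) * genPow η₁ η₂ (x, y₂, u))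
        (Ioi (u ^ 2 / x)) ∧
      ∫ y₂ in Ioi (u ^ 2 / x), genPow (-r₁) (-r₂) ((x, y₂, u) + b) * genPow η₁ η₂ (x, y₂, u)
        = betaSecondKind η₂ r₂ * x ^ η₁ * (x + b.1) ^ (-r₁ + r₂ - (η₂ + 1))
          * det ((x, u ^ 2 / x, u) + b) ^ (η₂ + 1 - r₂) := by
  have hα : 0 < x + b.1 := add_pos hx hb.1
  have hshift : ∀ s ∈ Ioi (0 : ℝ),
      genPow (-r₁) (-r₂) ((x, s + u ^ 2 / x, u) + b) * genPow η₁ η₂ (x, s + u ^ 2 / x, u)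
        = (x + b.1) ^ (-r₁ + r₂) * x ^ η₁
          * (s ^ η₂ * ((x + b.1) * s + det ((x, u ^ 2 / x, u) + b)) ^ (-r₂)) := by
    intro s (hs : 0 < s)
    have hdet_add : det ((x, s + u ^ 2 / x, u) + b)
        = (x + b.1) * s + det ((x, u ^ 2 / x, u) + b) := by
      simp only [det, Prod.fst_add, Prod.snd_add]; ring
    have hdet : det (x, s + u ^ 2 / x, u) = x * s := by simp only [det]; field_simp; ring
    simp only [genPow, hdet_add, hdet, Prod.fst_add, sub_neg_eq_add, mul_rpow hx.le hs.le]
    rw [show x ^ η₁ = x ^ (η₁ - η₂) * x ^ η₂ by rw [← rpow_add hx, sub_add_cancel]]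
    ring
  obtain ⟨hint, hval⟩ :=
    integral_rpow_mul_add_rpow_neg hη₂ hr₂ hα (det_add_boundary_pos hb hx u)
  have hshift_mp := measurePreserving_add_right (volume : Measure ℝ) (u ^ 2 / x)
  have hshift_emb := measurableEmbedding_addRight (u ^ 2 / x)
  have hpre : (· + u ^ 2 / x) ⁻¹' Ioi (u ^ 2 / x) = Ioi 0 := by ext s; simp
  constructor
  · rw [← hshift_mp.integrableOn_comp_preimage hshift_emb, hpre]
    exact IntegrableOn.congr_fun (hint.const_mul _) (fun s hs => (hshift s hs).symm)
      measurableSet_Ioi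
  · rw [← hshift_mp.setIntegral_preimage_emb hshift_emb, hpre,
      setIntegral_congr_fun measurableSet_Ioi hshift, integral_const_mul, hval,
      rpow_sub hα, rpow_neg hα.le]
    field_simp

lemma integral_det_add_boundary_rpow (hr₂ : η₂ + 3 / 2 < r₂) (hb : b ∈ cone) {x : ℝ}
    (hx : 0 < x) :
    Integrable (fun u => det ((x, u ^ 2 / x, u) + b) ^ (η₂ + 1 - r₂)) ∧
      ∫ u, det ((x, u ^ 2 / x, u) + b) ^ (η₂ + 1 - r₂)
        = oneAddSqIntegral (η₂ + 1 - r₂) * b.1 ^ (-(1 / 2) : ℝ) * (det b / b.1) ^ (η₂ + 3 / 2 - r₂)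
          * x ^ (1 / 2 : ℝ) * (x + b.1) ^ (η₂ + 3 / 2 - r₂) := by
  have hM : 0 < (x + b.1) * (det b / b.1) := mul_pos (add_pos hx hb.1) (div_pos hb.2 hb.1)
  obtain ⟨hint, hval⟩ := integral_quadratic_rpow (x * b.2.2 / b.1)
    (by linarith : η₂ + 1 - r₂ < -(1 / 2)) (div_pos hb.1 hx) hM
  simp only [det_add_boundary_eq hb.1 hx]
  refine ⟨hint, ?_⟩
  rw [hval, div_rpow hb.1.le hx.le, rpow_neg hx.le, div_inv_eq_mul,
    mul_rpow (add_pos hx hb.1).le (div_pos hb.2 hb.1).le,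
    show η₂ + 1 - r₂ + 1 / 2 = η₂ + 3 / 2 - r₂ by ring]
  ring

theorem integral_genPow_add_mul_genPow (hη₂ : -1 < η₂) (hη₁ : -(3 / 2) < η₁)
    (hr₂ : η₂ + 3 / 2 < r₂) (hr₁ : η₁ + 2 < r₁) (hb : b ∈ cone) :
    IntegrableOn (fun y => genPow (-r₁) (-r₂) (y + b) * genPow η₁ η₂ y) cone ∧
      ∫ y in cone, genPow (-r₁) (-r₂) (y + b) * genPow η₁ η₂ y
        = betaSecondKind (η₁ + 1 / 2) (r₁ - 1 / 2) * betaSecondKind η₂ r₂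
            * oneAddSqIntegral (η₂ + 1 - r₂) * genPow (η₁ - r₁) (η₂ - r₂) b
            * det b ^ (3 / 2 : ℝ) := by
  obtain ⟨hb₁, hdet⟩ := hb
  set c := betaSecondKind η₂ r₂ * oneAddSqIntegral (η₂ + 1 - r₂) * b.1 ^ (-(1 / 2) : ℝ)
    * (det b / b.1) ^ (η₂ + 3 / 2 - r₂)
  have hy₃ : ∀ x, 0 < x →
      Integrable (fun u => betaSecondKind η₂ r₂ * x ^ η₁ * (x + b.1) ^ (-r₁ + r₂ - (η₂ + 1))
        * det ((x, u ^ 2 / x, u) + b) ^ (η₂ + 1 - r₂)) ∧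
      ∫ u, betaSecondKind η₂ r₂ * x ^ η₁ * (x + b.1) ^ (-r₁ + r₂ - (η₂ + 1))
          * det ((x, u ^ 2 / x, u) + b) ^ (η₂ + 1 - r₂)
        = c * (x ^ (η₁ + 1 / 2) * (x + b.1) ^ (-(r₁ - 1 / 2))) := by
    intro x hx
    have hα : 0 < x + b.1 := add_pos hx hb₁
    obtain ⟨hint, hval⟩ := integral_det_add_boundary_rpow hr₂ ⟨hb₁, hdet⟩ hx
    refine ⟨hint.const_mul _, ?_⟩
    have hx_pow : x ^ (η₁ + 1 / 2) = x ^ η₁ * x ^ (1 / 2 : ℝ) := rpow_add hx _ _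
    have hα_pow : (x + b.1) ^ (-(r₁ - 1 / 2))
        = (x + b.1) ^ (-r₁ + r₂ - (η₂ + 1)) * (x + b.1) ^ (η₂ + 3 / 2 - r₂) := by
      rw [← rpow_add hα]; ring_nf
    rw [integral_const_mul, hval, hx_pow, hα_pow]
    ring
  have hF : Measurable fun y => genPow (-r₁) (-r₂) (y + b) * genPow η₁ η₂ y := by
    simp only [genPow, det]; fun_prop
  have hF₀ : ∀ y ∈ cone, 0 ≤ genPow (-r₁) (-r₂) (y + b) * genPow η₁ η₂ y := by
    intro y hy
    obtain ⟨hyb₁, hybdet⟩ := add_mem_cone hy ⟨hb₁, hdet⟩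
    obtain ⟨hy₁, hydet⟩ := hy
    simp only [genPow]
    positivity
  obtain ⟨hint, hval⟩ := integral_rpow_mul_add_rpow_neg (α := 1) (γ := b.1)
    (by linarith : -1 < η₁ + 1 / 2) (by linarith : η₁ + 1 / 2 + 1 < r₁ - 1 / 2) one_pos hb₁
  simp only [one_mul, one_rpow] at hint hval
  refine (integrableOn_cone_of_iterated hF hF₀
    (fun x hx u => integral_genPow_add_mul_genPow_y₂ hη₂ (by linarith) ⟨hb₁, hdet⟩ hx u)
    hy₃ (hint.const_mul c)).imp_right fun h => ?_
  have hb₁_pow : b.1 ^ ((η₁ - r₁) - (η₂ - r₂)) = b.1 ^ (-(1 / 2) : ℝ)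
      * b.1 ^ (η₁ + 1 / 2 + 1 - (r₁ - 1 / 2)) / b.1 ^ (η₂ + 3 / 2 - r₂) := by
    rw [← rpow_add hb₁, ← rpow_sub hb₁]; ring_nf
  have hdet_pow : det b ^ (η₂ + 3 / 2 - r₂) = det b ^ (η₂ - r₂) * det b ^ (3 / 2 : ℝ) := by
    rw [← rpow_add hdet]; ring_nf
  rw [h, integral_const_mul, hval, genPow, hb₁_pow]
  simp only [c, div_rpow hdet.le hb₁.le, hdet_pow]
  ring

end

end PosDefTwo

theorem stmt_11 (r1 r2 η1 η2 : ℝ)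
    (hη2 : -1 < η2) (hη1 : -(3/2) < η1)
    (hr2 : η2 + 3/2 < r2) (hr1 : η1 + 2 < r1) :
    ∃ C : ℝ, 0 < C ∧ ∀ b : ℝ × ℝ × ℝ,
      0 < b.1 → 0 < b.1 * b.2.1 - b.2.2 ^ 2 →
      IntegrableOn
        (fun y : ℝ × ℝ × ℝ =>
          (y.1 + b.1) ^ (-r1 + r2) *
            ((y.1 + b.1) * (y.2.1 + b.2.1) - (y.2.2 + b.2.2) ^ 2) ^ (-r2) *
          (y.1 ^ (η1 - η2) * (y.1 * y.2.1 - y.2.2 ^ 2) ^ η2))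
        {y : ℝ × ℝ × ℝ | 0 < y.1 ∧ 0 < y.1 * y.2.1 - y.2.2 ^ 2} volume ∧
      (∫ y in {y : ℝ × ℝ × ℝ | 0 < y.1 ∧ 0 < y.1 * y.2.1 - y.2.2 ^ 2},
          (y.1 + b.1) ^ (-r1 + r2) *
            ((y.1 + b.1) * (y.2.1 + b.2.1) - (y.2.2 + b.2.2) ^ 2) ^ (-r2) *
          (y.1 ^ (η1 - η2) * (y.1 * y.2.1 - y.2.2 ^ 2) ^ η2))
        = C * (b.1 ^ ((η1 - r1) - (η2 - r2)) * (b.1 * b.2.1 - b.2.2 ^ 2) ^ (η2 - r2)) *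
            (b.1 * b.2.1 - b.2.2 ^ 2) ^ ((3:ℝ)/2) := by
  refine ⟨betaSecondKind (η1 + 1 / 2) (r1 - 1 / 2) * betaSecondKind η2 r2
      * oneAddSqIntegral (η2 + 1 - r2),
    mul_pos (mul_pos (betaSecondKind_pos (by linarith) (by linarith))
      (betaSecondKind_pos hη2 (by linarith))) (oneAddSqIntegral_pos (by linarith)),
    fun b hb₁ hdet => ?_⟩
  simpa only [PosDefTwo.genPow, PosDefTwo.det, PosDefTwo.cone, Prod.fst_add, Prod.snd_add,
    sub_neg_eq_add] using
    PosDefTwo.integral_genPow_add_mul_genPow hη2 hη1 hr2 hr1 (b := b) ⟨hb₁, hdet⟩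
end
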